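/- Let n ≥ 1 and let k be an even natural number with 0 ≤ k < 2n, and write j = k/2. Then the symbol with first row (n, j, j−1, …, 1) and second row (j, j−1, …, 0) has rank n, and the symbols with rows ((j,…,0),(j,…,1)) and ((n,j,…,1),(j−1,…,0)) have ranks j and n respectively; consequently min{2j, 2n} = k. -/
import Mathlib

/-- rank of a symbol with rows `A`, `B`:
`ΣA + ΣB − ⌊(m₁+m₂−1)²/4⌋` (floor division of naturals). -/
def rk (A B : List ℕ) : ℤ :=
  (A.sum : ℤ) + (B.sum : ℤ) - (((A.length + B.length - 1) ^ 2 / 4 : ℕ) : ℤ)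

/-- the list `[m-1, m-2, …, 0]` (empty if `m = 0`). -/
def drow (m : ℕ) : List ℕ := (List.range m).reverse

/-- the list `[m, m-1, …, 1]` (empty if `m = 0`). -/
def drow1 (m : ℕ) : List ℕ := ((List.range m).reverse).map (· + 1)

lemma range_sum (m : ℕ) : 2 * (List.range m).sum + m = m * m := by
  induction m with
  | zero => simp
  | succ m ih =>
    rw [List.range_succ, List.sum_append]
    simp only [List.sum_cons, List.sum_nil]
    linarith

lemma drow_sum (m : ℕ) : 2 * (drow m).sum + m = m * m := by
  rw [drow, List.sum_reverse]; exact range_sum m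

lemma drow_len (m : ℕ) : (drow m).length = m := by simp [drow]

lemma map_add_one_sum (l : List ℕ) : (l.map (· + 1)).sum = l.sum + l.length := by
  induction l with
  | nil => simp
  | cons a l ih => simp [ih]; omega

lemma drow1_sum (m : ℕ) : 2 * (drow1 m).sum = m * m + m := by
  rw [drow1, map_add_one_sum, List.sum_reverse]
  have := range_sum m
  simp only [List.length_reverse, List.length_range]
  omega

lemma drow1_len (m : ℕ) : (drow1 m).length = m := by simp [drow1]

theorem stmt15 (n k j : ℕ) (hn : 1 ≤ n) (hk : Even k) (hkn : k < 2 * n)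
    (hj : j = k / 2) :
    rk (n :: drow1 j) (drow (j + 1)) = (n : ℤ) ∧
    rk (drow (j + 1)) (drow1 j) = (j : ℤ) ∧
    rk (n :: drow1 j) (drow j) = (n : ℤ) ∧
    min (2 * j) (2 * n) = k := by
  have h1 := drow_sum (j + 1)
  have h1' := drow_sum j
  have h2 := drow1_sum j
  have e1 : (n :: drow1 j).sum = n + (drow1 j).sum := by simp
  have e2 : (n :: drow1 j).length = j + 1 := by simp [drow1_len]
  have hq1 : ((j + 1) + (j + 1) - 1) ^ 2 / 4 = j * j + j := by
    have h : (j + 1) + (j + 1) - 1 = 2 * j + 1 := by omega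
    rw [h]
    have : (2 * j + 1) ^ 2 = 4 * (j * j + j) + 1 := by ring
    omega
  have hq2 : ((j + 1) + j - 1) ^ 2 / 4 = j * j := by
    have h : (j + 1) + j - 1 = 2 * j := by omega
    rw [h]
    have : (2 * j) ^ 2 = 4 * (j * j) := by ring
    omega
  refine ⟨?_, ?_, ?_, ?_⟩
  · rw [rk, e1, e2, drow_len, hq1]
    have h1z : 2 * ((drow (j+1)).sum : ℤ) + (j+1) = (j+1) * (j+1) := by exact_mod_cast h1
    have h2z : 2 * ((drow1 j).sum : ℤ) = j * j + j := by exact_mod_cast h2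
    push_cast
    linarith
  · rw [rk, drow_len, drow1_len, hq2]
    push_cast
    have h1z : 2 * ((drow (j+1)).sum : ℤ) + (j+1) = (j+1) * (j+1) := by exact_mod_cast h1
    have h2z : 2 * ((drow1 j).sum : ℤ) = j * j + j := by exact_mod_cast h2
    linarith
  · rw [rk, e1, e2, drow_len, hq2]
    have h1z : 2 * ((drow j).sum : ℤ) + j = j * j := by exact_mod_cast h1'
    have h2z : 2 * ((drow1 j).sum : ℤ) = j * j + j := by exact_mod_cast h2
    push_cast
    linarith
  · obtain ⟨m, hm⟩ := hk; omega
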